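/- arXiv:1907.07593 — 2 statements merged into one kernel-verified Lean document; each statement's English description precedes it below -/
import Mathlib

section
/- Let α1, α2, α3 : I* → (0,1] satisfy: α1 is submultiplicative (α1(ij) ≤ α1(i)α1(j)), α3 is supermultiplicative (α3(ij) ≥ α3(i)α3(j)), the product α1·α2·α3 is multiplicative, and α1 ≥ α2 ≥ α3 pointwise. Fix constants p1 ∈ [0,1], p2 ∈ [0,2] with p2 = 2p1. Then for s ≥ 2p2 − p1, the function ψ^s(i) = α1(i)^{p1} α2(i)^{p2−p1} α3(i)^{s−p2} is supermultiplicative, and for 0 ≤ s ≤ 2p2 − p1 it is submultiplicative. -/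
lemma psi_split (a b c p1 s : ℝ) (ha : 0 < a) (hb : 0 < b) (hc : 0 < c) :
    a ^ p1 * b ^ (2 * p1 - p1) * c ^ (s - 2 * p1)
      = (a * b * c) ^ p1 * c ^ (s - 3 * p1) := by
  rw [show s - 2 * p1 = p1 + (s - 3 * p1) by ring, Real.rpow_add hc,
    Real.mul_rpow (by positivity) hc.le, Real.mul_rpow ha.le hb.le,
    show 2 * p1 - p1 = p1 by ring]
  ring

theorem stmt3 {I : Type*} [Finite I] (α1 α2 α3 : List I → ℝ)
    (h1 : ∀ i, α1 i ∈ Set.Ioc (0 : ℝ) 1) (h2 : ∀ i, α2 i ∈ Set.Ioc (0 : ℝ) 1)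
    (h3 : ∀ i, α3 i ∈ Set.Ioc (0 : ℝ) 1)
    (hsub : ∀ i j : List I, α1 (i ++ j) ≤ α1 i * α1 j)
    (hsup : ∀ i j : List I, α3 i * α3 j ≤ α3 (i ++ j))
    (hmul : ∀ i j : List I,
      α1 (i ++ j) * α2 (i ++ j) * α3 (i ++ j) = (α1 i * α2 i * α3 i) * (α1 j * α2 j * α3 j))
    (hord : ∀ i : List I, α3 i ≤ α2 i ∧ α2 i ≤ α1 i)
    (p1 p2 : ℝ) (hp1 : p1 ∈ Set.Icc (0 : ℝ) 1) (hp2 : p2 ∈ Set.Icc (0 : ℝ) 2)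
    (hpp : p2 = 2 * p1) :
    (∀ s : ℝ, 2 * p2 - p1 ≤ s → ∀ i j : List I,
      (α1 i ^ p1 * α2 i ^ (p2 - p1) * α3 i ^ (s - p2)) *
          (α1 j ^ p1 * α2 j ^ (p2 - p1) * α3 j ^ (s - p2)) ≤
        α1 (i ++ j) ^ p1 * α2 (i ++ j) ^ (p2 - p1) * α3 (i ++ j) ^ (s - p2)) ∧
    (∀ s : ℝ, 0 ≤ s → s ≤ 2 * p2 - p1 → ∀ i j : List I,
      α1 (i ++ j) ^ p1 * α2 (i ++ j) ^ (p2 - p1) * α3 (i ++ j) ^ (s - p2) ≤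
        (α1 i ^ p1 * α2 i ^ (p2 - p1) * α3 i ^ (s - p2)) *
          (α1 j ^ p1 * α2 j ^ (p2 - p1) * α3 j ^ (s - p2))) := by
  subst hpp
  have hsplit : ∀ (s : ℝ) (i : List I),
      α1 i ^ p1 * α2 i ^ (2 * p1 - p1) * α3 i ^ (s - 2 * p1)
        = (α1 i * α2 i * α3 i) ^ p1 * α3 i ^ (s - 3 * p1) := fun s i =>
    psi_split _ _ _ _ _ (h1 i).1 (h2 i).1 (h3 i).1
  have hβ : ∀ i j : List I, (α1 (i ++ j) * α2 (i ++ j) * α3 (i ++ j)) ^ p1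
      = (α1 i * α2 i * α3 i) ^ p1 * (α1 j * α2 j * α3 j) ^ p1 := by
    intro i j
    have ai := (h1 i).1; have bi := (h2 i).1; have ci := (h3 i).1
    have aj := (h1 j).1; have bj := (h2 j).1; have cj := (h3 j).1
    rw [hmul, Real.mul_rpow (by positivity) (by positivity)]
  constructor
  · intro s hs i j
    have ci := (h3 i).1; have cj := (h3 j).1
    rw [hsplit, hsplit, hsplit, hβ]
    have he : 0 ≤ s - 3 * p1 := by linarith
    have key : α3 i ^ (s - 3 * p1) * α3 j ^ (s - 3 * p1) ≤ α3 (i ++ j) ^ (s - 3 * p1) := by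
      rw [← Real.mul_rpow ci.le cj.le]
      exact Real.rpow_le_rpow (by positivity) (hsup i j) he
    calc (α1 i * α2 i * α3 i) ^ p1 * α3 i ^ (s - 3 * p1) *
          ((α1 j * α2 j * α3 j) ^ p1 * α3 j ^ (s - 3 * p1))
        = (α1 i * α2 i * α3 i) ^ p1 * (α1 j * α2 j * α3 j) ^ p1 *
            (α3 i ^ (s - 3 * p1) * α3 j ^ (s - 3 * p1)) := by ring
      _ ≤ (α1 i * α2 i * α3 i) ^ p1 * (α1 j * α2 j * α3 j) ^ p1 * α3 (i ++ j) ^ (s - 3 * p1) := by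
          have ai := (h1 i).1; have bi := (h2 i).1
          have aj := (h1 j).1; have bj := (h2 j).1
          exact mul_le_mul_of_nonneg_left key (by positivity)
  · intro s hs0 hs i j
    have ci := (h3 i).1; have cj := (h3 j).1
    rw [hsplit, hsplit, hsplit, hβ]
    have he : s - 3 * p1 ≤ 0 := by linarith
    have key : α3 (i ++ j) ^ (s - 3 * p1) ≤ α3 i ^ (s - 3 * p1) * α3 j ^ (s - 3 * p1) := by
      rw [← Real.mul_rpow ci.le cj.le]
      exact Real.rpow_le_rpow_of_nonpos (by positivity) (hsup i j) he
    calc (α1 i * α2 i * α3 i) ^ p1 * (α1 j * α2 j * α3 j) ^ p1 * α3 (i ++ j) ^ (s - 3 * p1)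
        ≤ (α1 i * α2 i * α3 i) ^ p1 * (α1 j * α2 j * α3 j) ^ p1 *
            (α3 i ^ (s - 3 * p1) * α3 j ^ (s - 3 * p1)) := by
          have ai := (h1 i).1; have bi := (h2 i).1
          have aj := (h1 j).1; have bj := (h2 j).1
          exact mul_le_mul_of_nonneg_left key (by positivity)
      _ = (α1 i * α2 i * α3 i) ^ p1 * α3 i ^ (s - 3 * p1) *
            ((α1 j * α2 j * α3 j) ^ p1 * α3 j ^ (s - 3 * p1)) := by ring
end

section
/- Let 0 < c < a < 1 with a + c < 1, let t ∈ (0,1) solve a^t + c^t = 1, and let b, d ∈ (0,1). Then for every k ≥ 1 and every word i ∈ {1,2}^k with n1 ones: max{ (a^{n1} c^{k−n1})^t (b^{n1} d^{k−n1})^{1−t}, b^{n1} d^{k−n1} } ≤ (a^{n1} c^{k−n1})^t (b^{n1} d^{k−n1})^{1−t} + b^{n1} d^{k−n1}, and consequently lim_{k→∞} ( Σ_{i∈{1,2}^k} max{β1(i)^t β2(i)^{1−t}, β2(i)} )^{1/k} = max{ a^t b^{1−t} + c^t d^{1−t}, b + d }. -/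
/-!
Both `β₁ ^ t * β₂ ^ (1 - t)` and `β₂` are products of one factor per letter of the word, so their
sums over all words of length `k` are `A ^ k` and `B ^ k` with `A = a^t b^(1-t) + c^t d^(1-t)` and
`B = b + d`. The sum of the maxima is squeezed between `max (A ^ k) (B ^ k)` and
`A ^ k + B ^ k ≤ 2 * max A B ^ k`, and `2 ^ (1 / k) → 1`.
-/

open Filter Topology Finset

/-- The number of ones in the word `i` (coding the symbol `1` by `0 : Fin 2`). -/
def numOnes {k : ℕ} (i : Fin k → Fin 2) : ℕ :=
  (Finset.univ.filter fun j => i j = 0).card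

lemma card_filter_ne_zero_eq_sub_numOnes {k : ℕ} (i : Fin k → Fin 2) :
    #{j | ¬i j = 0} = k - numOnes i := by
  have := card_filter_add_card_filter_not (s := (univ : Finset (Fin k))) (fun j => i j = 0)
  rw [card_univ, Fintype.card_fin] at this
  unfold numOnes
  omega

theorem sum_pow_numOnes_mul_pow {R : Type*} [CommSemiring R] (x y : R) (k : ℕ) :
    ∑ i : Fin k → Fin 2, x ^ numOnes i * y ^ (k - numOnes i) = (x + y) ^ k := by
  have hexpand : (x + y) ^ k = ∏ _j : Fin k, ∑ v : Fin 2, if v = 0 then x else y := by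
    simp [Fin.sum_univ_two]
  rw [hexpand, prod_univ_sum, Fintype.piFinset_univ]
  refine sum_congr rfl fun i _ => ?_
  rw [prod_ite, prod_const, prod_const, card_filter_ne_zero_eq_sub_numOnes]
  rfl

lemma pow_mul_pow_rpow {x y : ℝ} (hx : 0 ≤ x) (hy : 0 ≤ y) (n m : ℕ) (s : ℝ) :
    (x ^ n * y ^ m) ^ s = (x ^ s) ^ n * (y ^ s) ^ m := by
  rw [Real.mul_rpow (by positivity) (by positivity), Real.rpow_pow_comm hx,
    Real.rpow_pow_comm hy]

theorem Finset.max_sum_le_sum_max {ι α : Type*} [AddCommMonoid α] [LinearOrder α]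
    [IsOrderedAddMonoid α] (s : Finset ι) (f g : ι → α) :
    max (∑ i ∈ s, f i) (∑ i ∈ s, g i) ≤ ∑ i ∈ s, max (f i) (g i) :=
  max_le (sum_le_sum fun _ _ => le_max_left _ _) (sum_le_sum fun _ _ => le_max_right _ _)

theorem Finset.sum_max_le_sum_add_sum {ι α : Type*} [AddCommMonoid α] [LinearOrder α]
    [IsOrderedAddMonoid α] {s : Finset ι} {f g : ι → α} (hf : ∀ i ∈ s, 0 ≤ f i)
    (hg : ∀ i ∈ s, 0 ≤ g i) :
    ∑ i ∈ s, max (f i) (g i) ≤ ∑ i ∈ s, f i + ∑ i ∈ s, g i := by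
  rw [← sum_add_distrib]
  exact sum_le_sum fun i hi => max_le_add_of_nonneg (hf i hi) (hg i hi)

lemma rpow_one_div_natCast_pow {M : ℝ} (hM : 0 ≤ M) {k : ℕ} (hk : k ≠ 0) :
    (M ^ k) ^ ((1 : ℝ) / k) = M := by
  rw [one_div, Real.pow_rpow_inv_natCast hM hk]

theorem tendsto_rpow_one_div_of_pow_le_of_le_mul_pow {u : ℕ → ℝ} {M C : ℝ} (hM : 0 ≤ M)
    (hC : 0 < C) (hlow : ∀ k, M ^ k ≤ u k) (hup : ∀ k, u k ≤ C * M ^ k) :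
    Tendsto (fun k : ℕ => u k ^ ((1 : ℝ) / k)) atTop (𝓝 M) := by
  have hroot_C : Tendsto (fun k : ℕ => C ^ ((1 : ℝ) / k)) atTop (𝓝 1) := by
    simpa [Function.comp_def] using (Real.continuousAt_const_rpow hC.ne').tendsto.comp
      tendsto_one_div_atTop_nhds_zero_nat
  have hupper := hroot_C.mul_const M
  rw [one_mul] at hupper
  refine tendsto_of_tendsto_of_tendsto_of_le_of_le' tendsto_const_nhds hupper ?_ ?_
  all_goals filter_upwards [eventually_ne_atTop 0] with k hk
  · calc M = (M ^ k) ^ ((1 : ℝ) / k) := (rpow_one_div_natCast_pow hM hk).symm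
      _ ≤ u k ^ ((1 : ℝ) / k) := Real.rpow_le_rpow (by positivity) (hlow k) (by positivity)
  · calc u k ^ ((1 : ℝ) / k) ≤ (C * M ^ k) ^ ((1 : ℝ) / k) :=
          Real.rpow_le_rpow ((pow_nonneg hM k).trans (hlow k)) (hup k) (by positivity)
      _ = C ^ ((1 : ℝ) / k) * M := by
          rw [Real.mul_rpow hC.le (by positivity), rpow_one_div_natCast_pow hM hk]

theorem tendsto_rpow_one_div_of_max_pow_le_of_le_pow_add_pow {u : ℕ → ℝ} {A B : ℝ}
    (hA : 0 ≤ A) (hB : 0 ≤ B) (hlow : ∀ k, max (A ^ k) (B ^ k) ≤ u k)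
    (hup : ∀ k, u k ≤ A ^ k + B ^ k) :
    Tendsto (fun k : ℕ => u k ^ ((1 : ℝ) / k)) atTop (𝓝 (max A B)) := by
  have hmax_pow : ∀ k : ℕ, max A B ^ k = max (A ^ k) (B ^ k) := fun k => by
    rcases le_total A B with h | h
    · rw [max_eq_right h, max_eq_right (pow_le_pow_left₀ hA h k)]
    · rw [max_eq_left h, max_eq_left (pow_le_pow_left₀ hB h k)]
  refine tendsto_rpow_one_div_of_pow_le_of_le_mul_pow (hA.trans (le_max_left A B)) two_pos
    (fun k => (hmax_pow k).symm ▸ hlow k) fun k => ?_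
  calc u k ≤ A ^ k + B ^ k := hup k
    _ ≤ 2 * max A B ^ k := by
        rw [two_mul, hmax_pow]
        exact add_le_add (le_max_left _ _) (le_max_right _ _)

theorem stmt11_general (a c : ℝ) (h0c : 0 < c) (hca : c < a) (t : ℝ)
    (b d : ℝ) (hb : b ∈ Set.Ioo (0 : ℝ) 1) (hd : d ∈ Set.Ioo (0 : ℝ) 1) :
    (∀ k : ℕ, 1 ≤ k → ∀ i : Fin k → Fin 2,
      max ((a ^ numOnes i * c ^ (k - numOnes i) : ℝ) ^ t *
            (b ^ numOnes i * d ^ (k - numOnes i) : ℝ) ^ (1 - t))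
          ((b ^ numOnes i * d ^ (k - numOnes i) : ℝ)) ≤
        (a ^ numOnes i * c ^ (k - numOnes i) : ℝ) ^ t *
            (b ^ numOnes i * d ^ (k - numOnes i) : ℝ) ^ (1 - t) +
          (b ^ numOnes i * d ^ (k - numOnes i) : ℝ)) ∧
    Tendsto
      (fun k : ℕ =>
        (∑ i : Fin k → Fin 2,
            max ((a ^ numOnes i * c ^ (k - numOnes i) : ℝ) ^ t *
                  (b ^ numOnes i * d ^ (k - numOnes i) : ℝ) ^ (1 - t))
                ((b ^ numOnes i * d ^ (k - numOnes i) : ℝ))) ^ ((1 : ℝ) / k))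
      atTop (nhds (max (a ^ t * b ^ (1 - t) + c ^ t * d ^ (1 - t)) (b + d))) := by
  have ha : 0 < a := h0c.trans hca
  have hb0 := hb.1
  have hd0 := hd.1
  have hsum_mixed : ∀ k : ℕ, ∑ i : Fin k → Fin 2,
      (a ^ numOnes i * c ^ (k - numOnes i)) ^ t * (b ^ numOnes i * d ^ (k - numOnes i)) ^ (1 - t)
        = (a ^ t * b ^ (1 - t) + c ^ t * d ^ (1 - t)) ^ k := fun k => by
    rw [← sum_pow_numOnes_mul_pow]
    refine sum_congr rfl fun i _ => ?_
    rw [pow_mul_pow_rpow ha.le h0c.le, pow_mul_pow_rpow hb0.le hd0.le, mul_pow, mul_pow]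
    ring
  refine ⟨fun k _ i => max_le_add_of_nonneg (by positivity) (by positivity),
    tendsto_rpow_one_div_of_max_pow_le_of_le_pow_add_pow (by positivity) (by positivity)
      (fun k => ?_) (fun k => ?_)⟩
  · rw [← hsum_mixed, ← sum_pow_numOnes_mul_pow]
    exact max_sum_le_sum_max _ _ _
  · rw [← hsum_mixed, ← sum_pow_numOnes_mul_pow]
    exact sum_max_le_sum_add_sum (fun _ _ => by positivity) (fun _ _ => by positivity)

theorem stmt11 (a c : ℝ) (h0c : 0 < c) (hca : c < a) (ha1 : a < 1) (hac : a + c < 1)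
    (t : ℝ) (ht : t ∈ Set.Ioo (0 : ℝ) 1) (hts : a ^ t + c ^ t = 1)
    (b d : ℝ) (hb : b ∈ Set.Ioo (0 : ℝ) 1) (hd : d ∈ Set.Ioo (0 : ℝ) 1) :
    (∀ k : ℕ, 1 ≤ k → ∀ i : Fin k → Fin 2,
      max ((a ^ numOnes i * c ^ (k - numOnes i) : ℝ) ^ t *
            (b ^ numOnes i * d ^ (k - numOnes i) : ℝ) ^ (1 - t))
          ((b ^ numOnes i * d ^ (k - numOnes i) : ℝ)) ≤
        (a ^ numOnes i * c ^ (k - numOnes i) : ℝ) ^ t *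
            (b ^ numOnes i * d ^ (k - numOnes i) : ℝ) ^ (1 - t) +
          (b ^ numOnes i * d ^ (k - numOnes i) : ℝ)) ∧
    Tendsto
      (fun k : ℕ =>
        (∑ i : Fin k → Fin 2,
            max ((a ^ numOnes i * c ^ (k - numOnes i) : ℝ) ^ t *
                  (b ^ numOnes i * d ^ (k - numOnes i) : ℝ) ^ (1 - t))
                ((b ^ numOnes i * d ^ (k - numOnes i) : ℝ))) ^ ((1 : ℝ) / k))
      atTop (nhds (max (a ^ t * b ^ (1 - t) + c ^ t * d ^ (1 - t)) (b + d))) :=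
  stmt11_general a c h0c hca t b d hb hd
end
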